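/- arXiv:2406.13797 — 5 statements merged into one kernel-verified Lean document; each statement's English description precedes it below -/
import Mathlib

section
/- Let S ⊆ O_n be a set of real orthogonal n×n matrices and let E be a subset of S such that the subgroup of O_n generated by S equals the subgroup generated by E, i.e. ⟨S⟩ = ⟨E⟩. Then Cl(S*) = Cl(⟨E⟩); in particular, Cl(S*) is a subgroup of O_n. -/
open Matrix
/-- A subset of `ℝ^{n×n}` is a subgroup of the orthogonal group `O_n` if it consists of
orthogonal matrices, contains the identity, and is closed under products and inverses
(for orthogonal matrices, the inverse is the transpose). -/
def IsOrthSubgroup {m : Type*} [Fintype m] [DecidableEq m]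
    (A : Set (Matrix m m ℝ)) : Prop :=
  A ⊆ (Matrix.orthogonalGroup m ℝ : Set (Matrix m m ℝ)) ∧
    (1 : Matrix m m ℝ) ∈ A ∧
    (∀ X ∈ A, ∀ Y ∈ A, X * Y ∈ A) ∧
    (∀ X ∈ A, Xᵀ ∈ A)

/-- The subgroup of the orthogonal group `O_n` generated by a set `E` of orthogonal
matrices, viewed as a set of matrices. -/
def orthSubgroupClosure {m : Type*} [Fintype m] [DecidableEq m]
    (E : Set (Matrix m m ℝ)) : Set (Matrix m m ℝ) :=
  (fun u : Matrix.orthogonalGroup m ℝ => (u : Matrix m m ℝ)) ''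
    (Subgroup.closure
      ((fun u : Matrix.orthogonalGroup m ℝ => (u : Matrix m m ℝ)) ⁻¹' E) :
      Set (Matrix.orthogonalGroup m ℝ))

/-!
`O_n` is a compact group, and in a compact group the closure of the submonoid generated by a set
equals the closure of the subgroup it generates, because every `g⁻¹` is a limit of positive powers
of `g`. As `O_n` is closed in the space of matrices, closures taken in `O_n` and in the space of
matrices agree, and the closure of a subgroup of `O_n` is again a subgroup.
-/

open Set

theorem Matrix.isCompact_unitaryGroup {n 𝕜 : Type*} [Fintype n] [DecidableEq n] [RCLike 𝕜] :
    IsCompact (Matrix.unitaryGroup n 𝕜 : Set (Matrix n n 𝕜)) := by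
  have hcube : IsCompact (univ.pi fun _ : n ↦ univ.pi fun _ : n ↦ Metric.closedBall (0 : 𝕜) 1) :=
    isCompact_univ_pi fun _ ↦ isCompact_univ_pi fun _ ↦ isCompact_closedBall 0 1
  refine hcube.of_isClosed_subset (isClosed_unitary (R := Matrix n n 𝕜)) fun U hU i _ j _ ↦ ?_
  simpa using entry_norm_bound_of_unitary hU i j

instance {n 𝕜 : Type*} [Fintype n] [DecidableEq n] [RCLike 𝕜] :
    CompactSpace (Matrix.unitaryGroup n 𝕜) :=
  isCompact_iff_compactSpace.mp Matrix.isCompact_unitaryGroup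

theorem closure_submonoidClosure_eq_image_of_subset {M : Type*} [Monoid M] [TopologicalSpace M]
    {G : Submonoid M} (hG : IsClosed (G : Set M)) {S : Set M} (hS : S ⊆ G) :
    closure (Submonoid.closure S : Set M) =
      (↑) '' closure (Submonoid.closure ((↑) ⁻¹' S : Set G) : Set G) := by
  have hmap : (Submonoid.closure S : Set M) =
      (↑) '' (Submonoid.closure ((↑) ⁻¹' S : Set G) : Set G) := by
    rw [← G.coe_subtype, ← Submonoid.coe_map, MonoidHom.map_mclosure, G.coe_subtype,
      image_preimage_eq_of_subset (by rwa [Subtype.range_coe])]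
  rw [hmap]
  exact hG.isClosedEmbedding_subtypeVal.closure_image_eq _

theorem isOrthSubgroup_image_coe {m : Type*} [Fintype m] [DecidableEq m]
    (H : Subgroup (Matrix.orthogonalGroup m ℝ)) :
    IsOrthSubgroup (((↑) : Matrix.orthogonalGroup m ℝ → Matrix m m ℝ) '' H) := by
  refine ⟨image_subset_iff.mpr fun u _ ↦ u.2, ⟨1, H.one_mem, rfl⟩, ?_, ?_⟩
  · rintro _ ⟨u, hu, rfl⟩ _ ⟨v, hv, rfl⟩
    exact ⟨u * v, H.mul_mem hu hv, rfl⟩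
  · rintro _ ⟨u, hu, rfl⟩
    exact ⟨u⁻¹, H.inv_mem hu,
      (star_eq_conjTranspose _).trans (conjTranspose_eq_transpose_of_trivial _)⟩

theorem closure_submonoid_eq_closure_subgroup_general {n : ℕ}
    (S E : Set (Matrix (Fin n) (Fin n) ℝ))
    (hS : S ⊆ (Matrix.orthogonalGroup (Fin n) ℝ : Set (Matrix (Fin n) (Fin n) ℝ)))
    (hgen : Subgroup.closure
        ((fun u : Matrix.orthogonalGroup (Fin n) ℝ =>
          (u : Matrix (Fin n) (Fin n) ℝ)) ⁻¹' S) =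
      Subgroup.closure
        ((fun u : Matrix.orthogonalGroup (Fin n) ℝ =>
          (u : Matrix (Fin n) (Fin n) ℝ)) ⁻¹' E)) :
    closure (Submonoid.closure S : Set (Matrix (Fin n) (Fin n) ℝ)) =
      closure (orthSubgroupClosure E) ∧
    IsOrthSubgroup (closure (Submonoid.closure S : Set (Matrix (Fin n) (Fin n) ℝ))) := by
  have hclosed : IsClosed (orthogonalGroup (Fin n) ℝ : Set (Matrix (Fin n) (Fin n) ℝ)) :=
    isClosed_unitary
  have hclosure : closure (Submonoid.closure S : Set (Matrix (Fin n) (Fin n) ℝ)) =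
      (↑) '' ((Subgroup.closure (((↑) : orthogonalGroup (Fin n) ℝ → _) ⁻¹' E)).topologicalClosure :
        Set (orthogonalGroup (Fin n) ℝ)) := by
    rw [closure_submonoidClosure_eq_image_of_subset hclosed hS,
      closure_submonoidClosure_eq_closure_subgroupClosure, hgen, Subgroup.topologicalClosure_coe]
  refine ⟨?_, hclosure ▸ isOrthSubgroup_image_coe _⟩
  rw [hclosure]
  exact (hclosed.isClosedEmbedding_subtypeVal.closure_image_eq _).symm

/-- Let `S` be a set of real orthogonal `n × n` matrices and `E ⊆ S` with
`⟨S⟩ = ⟨E⟩` (subgroups of `O_n`). Then `Cl(S*) = Cl(⟨E⟩)`, and in particular `Cl(S*)` is a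
subgroup of `O_n`, where `S*` is the submonoid generated by `S` and `Cl` is the Euclidean
closure. -/
theorem closure_submonoid_eq_closure_subgroup {n : ℕ}
    (S E : Set (Matrix (Fin n) (Fin n) ℝ))
    (hS : S ⊆ (Matrix.orthogonalGroup (Fin n) ℝ : Set (Matrix (Fin n) (Fin n) ℝ)))
    (hES : E ⊆ S)
    (hgen : Subgroup.closure
        ((fun u : Matrix.orthogonalGroup (Fin n) ℝ =>
          (u : Matrix (Fin n) (Fin n) ℝ)) ⁻¹' S) =
      Subgroup.closure
        ((fun u : Matrix.orthogonalGroup (Fin n) ℝ =>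
          (u : Matrix (Fin n) (Fin n) ℝ)) ⁻¹' E)) :
    closure (Submonoid.closure S : Set (Matrix (Fin n) (Fin n) ℝ)) =
      closure (orthSubgroupClosure E) ∧
    IsOrthSubgroup (closure (Submonoid.closure S : Set (Matrix (Fin n) (Fin n) ℝ))) :=
  closure_submonoid_eq_closure_subgroup_general S E hS hgen
end

section
/- Let E be a set of real orthogonal n×n matrices. Then Cl(⟨E⟩) is a subgroup of O_n, and Cl(⟨E⟩) equals the set of all matrices X ∈ ℝ^{n×n} such that p(X) = 0 for every real polynomial p in the n² entry variables x_{1,1},…,x_{n,n} satisfying p(I) = 0 and p(eY) = p(Y) for all e ∈ E and all Y ∈ ℝ^{n×n} (where I is the identity matrix and eY is the matrix product). -/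
/-!
Let `K` be the closure of `⟨E⟩` in the compact group `O_n`; it is a compact subgroup. The
polynomials `p` with `p (e * Y) = p Y` for all `e ∈ E` are exactly those invariant under left
translation by `K`, since the elements translating `p` to itself form a closed subgroup. Such a `p`
with `p 1 = 0` therefore vanishes on `K`. Conversely, if `X ∉ K`, the compact sets `K` and `K X`
are disjoint, so by Urysohn and Stone–Weierstrass some polynomial `q` is `< 1/4` on `K` and
`> 3/4` on `K X`. Averaging `Y ↦ q (k * Y)` over the Haar probability measure of `K` gives a
`K`-invariant function that is again a polynomial (its coefficients are integrals of polynomial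
functions of `k`), is `≤ 1/4` at `1` and `≥ 3/4` at `X`; subtracting its value at `1` gives the
required `p`.
-/
open Matrix

/-- Evaluation of a real polynomial in the `n²` entry variables at a matrix. -/
noncomputable def evalMat {m : Type*} [Fintype m]
    (p : MvPolynomial (m × m) ℝ) (M : Matrix m m ℝ) : ℝ :=
  MvPolynomial.eval (fun q : m × m => M q.1 q.2) p

open MvPolynomial MeasureTheory

namespace Matrix

instance {m n R : Type*} [TopologicalSpace R] [LocallyCompactSpace R] [Finite m] [Finite n] :
    LocallyCompactSpace (Matrix m n R) :=
  inferInstanceAs (LocallyCompactSpace (m → n → R))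

variable {𝕜 m : Type*} [RCLike 𝕜] [Fintype m] [DecidableEq m]

theorem isCompact_unitaryGroup_s3 : IsCompact (unitaryGroup m 𝕜 : Set (Matrix m m 𝕜)) := by
  refine (isCompact_univ_pi fun _ => isCompact_univ_pi fun _ => isCompact_closedBall (0 : 𝕜) 1)
    |>.of_isClosed_subset (isClosed_unitary (R := Matrix m m 𝕜)) fun U hU i _ j _ => ?_
  simpa using entry_norm_bound_of_unitary hU i j

instance : CompactSpace (unitaryGroup m 𝕜) :=
  isCompact_iff_compactSpace.mp isCompact_unitaryGroup_s3

end Matrix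

theorem exists_isProbabilityMeasure_isMulRightInvariant (Γ : Type*) [Group Γ]
    [TopologicalSpace Γ] [IsTopologicalGroup Γ] [CompactSpace Γ] [MeasurableSpace Γ]
    [BorelSpace Γ] : ∃ μ : Measure Γ, IsProbabilityMeasure μ ∧ μ.IsMulRightInvariant := by
  have : Nonempty Γ := ⟨1⟩
  refine ⟨(Measure.haarMeasure ⊤).inv, ⟨?_⟩, inferInstance⟩
  rw [Measure.inv_apply, Set.inv_univ]
  exact Measure.haarMeasure_self

theorem MvPolynomial.exists_eval_eq_integral_eval_map {σ τ Γ : Type*} [MeasurableSpace Γ]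
    (μ : Measure Γ) (A : MvPolynomial σ (MvPolynomial τ ℝ)) (φ : Γ → τ → ℝ)
    (hA : ∀ d, Integrable (fun g => eval (φ g) (A.coeff d)) μ) :
    ∃ p : MvPolynomial σ ℝ, ∀ x, eval x p = ∫ g, eval x (map (eval (φ g)) A) ∂μ := by
  refine ⟨∑ d ∈ A.support, monomial d (∫ g, eval (φ g) (A.coeff d) ∂μ), fun x => ?_⟩
  simp only [eval_map, eval₂_eq, map_sum, eval_monomial]
  rw [integral_finsetSum _ fun d _ => (hA d).mul_const _]
  simp only [integral_mul_const, Finsupp.prod]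

section evalMat

variable {m : Type*} [Fintype m]

theorem continuous_evalMat (p : MvPolynomial (m × m) ℝ) : Continuous (evalMat p) :=
  (continuous_eval p).comp (continuous_pi fun ij => continuous_apply_apply ij.1 ij.2)

theorem exists_evalMat_near_of_isCompact {T : Set (Matrix m m ℝ)} (hT : IsCompact T)
    (f : C(Matrix m m ℝ, ℝ)) {ε : ℝ} (hε : 0 < ε) :
    ∃ q : MvPolynomial (m × m) ℝ, ∀ t ∈ T, |evalMat q t - f t| < ε := by
  let Φ : MvPolynomial (m × m) ℝ →ₐ[ℝ] C(Matrix m m ℝ, ℝ) :=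
    aeval fun ij => ⟨fun M => M ij.1 ij.2, continuous_apply_apply ij.1 ij.2⟩
  have hΦ (q : MvPolynomial (m × m) ℝ) : ⇑(Φ q) = evalMat q := by
    ext M
    induction q using MvPolynomial.induction_on with
    | C a => simp [Φ, evalMat]
    | add p q hp hq => simp_all [evalMat]
    | mul_X p ij hp =>
      rw [map_mul, ContinuousMap.mul_apply, hp, aeval_X, evalMat, evalMat, eval_mul, eval_X]
      rfl
  have hsep : Φ.range.SeparatesPoints := by
    intro M N hMN
    obtain ⟨i, j, hij⟩ : ∃ i j, M i j ≠ N i j := by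
      by_contra! h
      exact hMN (Matrix.ext h)
    exact ⟨Φ (X (i, j)), ⟨_, ⟨X (i, j), rfl⟩, rfl⟩, by simpa [hΦ, evalMat] using hij⟩
  obtain ⟨g, ⟨q, rfl⟩, hg⟩ :=
    ContinuousMap.exists_mem_subalgebra_near_continuous_of_isCompact_of_separatesPoints
      hsep f hT hε
  exact ⟨q, fun t ht => by simpa [hΦ] using hg t ht⟩

theorem exists_evalMat_separating {S T : Set (Matrix m m ℝ)} (hS : IsCompact S)
    (hT : IsCompact T) (hST : Disjoint S T) :
    ∃ q : MvPolynomial (m × m) ℝ,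
      (∀ s ∈ S, evalMat q s < 1 / 4) ∧ ∀ t ∈ T, 3 / 4 < evalMat q t := by
  obtain ⟨f, hf0, hf1, -⟩ := exists_continuous_zero_one_of_isCompact hS hT.isClosed hST
  obtain ⟨q, hq⟩ :=
    exists_evalMat_near_of_isCompact (hS.union hT) f (by norm_num : (0 : ℝ) < 1 / 4)
  refine ⟨q, fun s hs => ?_, fun t ht => ?_⟩
  · have := hq s (.inl hs)
    rw [hf0 hs, Pi.zero_apply, sub_zero] at this
    linarith [abs_lt.1 this]
  · have := hq t (.inr ht)
    rw [hf1 ht, Pi.one_apply] at this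
    linarith [abs_lt.1 this]

/-- `q (k * Y)` as a polynomial in the entries of `Y` whose coefficients are polynomials in the
entries of `k`. -/
noncomputable def leftMulPoly (q : MvPolynomial (m × m) ℝ) :
    MvPolynomial (m × m) (MvPolynomial (m × m) ℝ) :=
  aeval (fun ij : m × m => ∑ l, C (X (ij.1, l)) * X (l, ij.2)) q

theorem evalMat_map_leftMulPoly (q : MvPolynomial (m × m) ℝ) (k Y : Matrix m m ℝ) :
    evalMat (map (eval fun ij : m × m => k ij.1 ij.2) (leftMulPoly q)) Y = evalMat q (k * Y) := by
  induction q using MvPolynomial.induction_on with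
  | C a => simp [leftMulPoly, evalMat]
  | add p q hp hq => simp_all [leftMulPoly, evalMat]
  | mul_X p ij hp => simp_all [leftMulPoly, evalMat, Matrix.mul_apply]

theorem exists_evalMat_eq_integral {Γ : Type*} [TopologicalSpace Γ] [CompactSpace Γ]
    [MeasurableSpace Γ] [OpensMeasurableSpace Γ] (μ : Measure Γ) [IsFiniteMeasure μ]
    {ρ : Γ → Matrix m m ℝ} (hρ : Continuous ρ) (q : MvPolynomial (m × m) ℝ) :
    ∃ p : MvPolynomial (m × m) ℝ, ∀ Y, evalMat p Y = ∫ g, evalMat q (ρ g * Y) ∂μ := by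
  have hcoeff (d : (m × m) →₀ ℕ) :
      Continuous fun g => eval (fun ij : m × m => ρ g ij.1 ij.2) ((leftMulPoly q).coeff d) :=
    (continuous_eval _).comp (continuous_pi fun ij => hρ.matrix_elem ij.1 ij.2)
  obtain ⟨p, hp⟩ := exists_eval_eq_integral_eval_map μ (leftMulPoly q)
    (fun g ij => ρ g ij.1 ij.2) fun d =>
      (hcoeff d).integrable_of_hasCompactSupport (.of_compactSpace _)
  exact ⟨p, fun Y => (hp _).trans <| integral_congr_ae <|
    ae_of_all _ fun g => evalMat_map_leftMulPoly q (ρ g) Y⟩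

variable [DecidableEq m]

theorem exists_leftInvariant_evalMat_eq_integral {Γ : Type*} [Group Γ]
    [TopologicalSpace Γ] [CompactSpace Γ] [MeasurableSpace Γ] [OpensMeasurableSpace Γ]
    [MeasurableMul Γ]
    (μ : Measure Γ) [IsFiniteMeasure μ] [μ.IsMulRightInvariant]
    (ρ : Γ →* Matrix m m ℝ) (hρ : Continuous ρ) (q : MvPolynomial (m × m) ℝ) :
    ∃ p : MvPolynomial (m × m) ℝ, (∀ g Y, evalMat p (ρ g * Y) = evalMat p Y) ∧
      ∀ Y, evalMat p Y = ∫ g, evalMat q (ρ g * Y) ∂μ := by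
  obtain ⟨p, hp⟩ := exists_evalMat_eq_integral μ hρ q
  refine ⟨p, fun g Y => ?_, hp⟩
  simp_rw [hp, ← mul_assoc, ← map_mul]
  exact integral_mul_right_eq_self (fun h => evalMat q (ρ h * Y)) g

theorem exists_leftInvariant_poly_separating {Γ : Type*} [Group Γ]
    [TopologicalSpace Γ] [IsTopologicalGroup Γ] [CompactSpace Γ]
    (ρ : Γ →* Matrix m m ℝ) (hρ : Continuous ρ) {X : Matrix m m ℝ} (hX : X ∉ Set.range ρ) :
    ∃ p : MvPolynomial (m × m) ℝ, evalMat p 1 = 0 ∧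
      (∀ g Y, evalMat p (ρ g * Y) = evalMat p Y) ∧ evalMat p X ≠ 0 := by
  have hdisj : Disjoint (Set.range ρ) (Set.range fun g => ρ g * X) := by
    refine Set.disjoint_left.2 ?_
    rintro _ ⟨a, rfl⟩ ⟨b, hb⟩
    refine hX ⟨b⁻¹ * a, ?_⟩
    rw [map_mul, ← hb, ← mul_assoc, ← map_mul, inv_mul_cancel, map_one, one_mul]
  obtain ⟨q, hq1, hqX⟩ := exists_evalMat_separating (isCompact_range hρ)
    (isCompact_range (hρ.mul continuous_const)) hdisj
  let : MeasurableSpace Γ := borel Γ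
  have : BorelSpace Γ := ⟨rfl⟩
  obtain ⟨μ, hμ, hμinv⟩ := exists_isProbabilityMeasure_isMulRightInvariant Γ
  obtain ⟨p, hp_inv, hp⟩ := exists_leftInvariant_evalMat_eq_integral μ ρ hρ q
  have hint (Y : Matrix m m ℝ) : Integrable (fun g => evalMat q (ρ g * Y)) μ :=
    ((continuous_evalMat q).comp (hρ.mul continuous_const)).integrable_of_hasCompactSupport
      (.of_compactSpace _)
  have hp1 : evalMat p 1 ≤ 1 / 4 := by
    rw [hp]
    refine (integral_mono (hint 1) (integrable_const (1 / 4 : ℝ)) fun g => ?_).trans_eq (by simp)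
    simpa using (hq1 _ ⟨g, rfl⟩).le
  have hpX : 3 / 4 ≤ evalMat p X := by
    rw [hp]
    refine (integral_mono (integrable_const (3 / 4 : ℝ)) (hint X) fun g => ?_).trans_eq' (by simp)
    exact (hqX _ ⟨g, rfl⟩).le
  have hshift (Y : Matrix m m ℝ) :
      evalMat (p - C (evalMat p 1)) Y = evalMat p Y - evalMat p 1 := by
    simp [evalMat]
  refine ⟨p - C (evalMat p 1), by rw [hshift, sub_self],
    fun g Y => by rw [hshift, hshift, hp_inv], ?_⟩
  rw [hshift]
  linarith

theorem isOrthSubgroup_image_val (K : Subgroup (orthogonalGroup m ℝ)) :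
    IsOrthSubgroup (Subtype.val '' (K : Set (orthogonalGroup m ℝ))) := by
  refine ⟨?_, ⟨1, K.one_mem, rfl⟩, ?_, ?_⟩
  · rintro _ ⟨u, -, rfl⟩
    exact u.2
  · rintro _ ⟨u, hu, rfl⟩ _ ⟨v, hv, rfl⟩
    exact ⟨u * v, K.mul_mem hu hv, rfl⟩
  · rintro _ ⟨u, hu, rfl⟩
    exact ⟨u⁻¹, K.inv_mem hu, by simp [star_eq_conjTranspose]⟩

def leftInvariantSubgroup (p : MvPolynomial (m × m) ℝ) : Subgroup (orthogonalGroup m ℝ) where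
  carrier := {g | ∀ Y, evalMat p ((g : Matrix m m ℝ) * Y) = evalMat p Y}
  mul_mem' {g h} hg hh Y := by
    rw [UnitaryGroup.mul_val, mul_assoc, hg, hh]
  one_mem' Y := by rw [UnitaryGroup.one_val, one_mul]
  inv_mem' {g} hg Y := by
    rw [← hg, ← mul_assoc, ← UnitaryGroup.mul_val, mul_inv_cancel, UnitaryGroup.one_val,
      one_mul]

@[simp]
theorem mem_leftInvariantSubgroup {p : MvPolynomial (m × m) ℝ} {g : orthogonalGroup m ℝ} :
    g ∈ leftInvariantSubgroup p ↔ ∀ Y, evalMat p ((g : Matrix m m ℝ) * Y) = evalMat p Y :=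
  Iff.rfl

theorem isClosed_leftInvariantSubgroup (p : MvPolynomial (m × m) ℝ) :
    IsClosed (leftInvariantSubgroup p : Set (orthogonalGroup m ℝ)) := by
  simp only [leftInvariantSubgroup, Subgroup.coe_set_mk, Submonoid.coe_set_mk, Set.ofPred_forall]
  exact isClosed_iInter fun Y => isClosed_eq
    ((continuous_evalMat p).comp (continuous_subtype_val.mul continuous_const)) continuous_const

theorem topologicalClosure_closure_le_leftInvariantSubgroup_iff {S : Set (orthogonalGroup m ℝ)}
    {p : MvPolynomial (m × m) ℝ} :
    (Subgroup.closure S).topologicalClosure ≤ leftInvariantSubgroup p ↔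
      ∀ g ∈ S, ∀ Y, evalMat p ((g : Matrix m m ℝ) * Y) = evalMat p Y :=
  ⟨fun h _ hg => mem_leftInvariantSubgroup.1 <|
      h (Subgroup.le_topologicalClosure _ (Subgroup.subset_closure hg)),
    fun h => Subgroup.topologicalClosure_minimal _
      ((Subgroup.closure_le _).2 fun g hg => mem_leftInvariantSubgroup.2 (h g hg))
      (isClosed_leftInvariantSubgroup p)⟩

end evalMat

/-- For a set `E` of real orthogonal `n × n` matrices, the Euclidean closure
`Cl(⟨E⟩)` of the subgroup generated by `E` is a subgroup of `O_n`, and it equals the set of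
matrices `X` annihilated by every polynomial `p` in the `n²` entry variables satisfying
`p(I) = 0` and `p(eY) = p(Y)` for all `e ∈ E` and all matrices `Y`. -/
theorem closure_subgroup_eq_zero_set {n : ℕ}
    (E : Set (Matrix (Fin n) (Fin n) ℝ))
    (hE : E ⊆ (Matrix.orthogonalGroup (Fin n) ℝ : Set (Matrix (Fin n) (Fin n) ℝ))) :
    IsOrthSubgroup (closure (orthSubgroupClosure E)) ∧
    closure (orthSubgroupClosure E) =
      {X : Matrix (Fin n) (Fin n) ℝ | ∀ p : MvPolynomial (Fin n × Fin n) ℝ,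
        (evalMat p (1 : Matrix (Fin n) (Fin n) ℝ) = 0 ∧
          ∀ e ∈ E, ∀ Y : Matrix (Fin n) (Fin n) ℝ, evalMat p (e * Y) = evalMat p Y) →
        evalMat p X = 0} := by
  set H := Subgroup.closure (Subtype.val ⁻¹' E : Set (orthogonalGroup (Fin n) ℝ))
  set K := H.topologicalClosure
  have hK :
      closure (orthSubgroupClosure E) = Subtype.val '' (K : Set (orthogonalGroup (Fin n) ℝ)) :=
    (isClosed_unitary (R := Matrix (Fin n) (Fin n) ℝ)).isClosedEmbedding_subtypeVal
      |>.closure_image_eq _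
  have hKinv (p : MvPolynomial (Fin n × Fin n) ℝ) :
      (∀ e ∈ E, ∀ Y, evalMat p (e * Y) = evalMat p Y) ↔ K ≤ leftInvariantSubgroup p := by
    rw [topologicalClosure_closure_le_leftInvariantSubgroup_iff]
    exact ⟨fun h g hg Y => h g hg Y, fun h e he Y => h ⟨e, hE he⟩ he Y⟩
  rw [hK]
  refine ⟨isOrthSubgroup_image_val K,
    Set.ext fun X => ⟨?_, fun hX => by_contra fun hXK => ?_⟩⟩
  · rintro ⟨k, hk, rfl⟩ p ⟨hp1, hpE⟩
    simpa [hp1] using (hKinv p).1 hpE hk 1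
  · have : CompactSpace K := isCompact_iff_compactSpace.1 H.isClosed_topologicalClosure.isCompact
    obtain ⟨p, hp1, hpK, hpX⟩ := exists_leftInvariant_poly_separating
      ((orthogonalGroup (Fin n) ℝ).subtype.comp K.subtype)
      (continuous_subtype_val.comp continuous_subtype_val) (X := X)
      (by rintro ⟨k, rfl⟩; exact hXK ⟨k, k.2, rfl⟩)
    exact hpX (hX p ⟨hp1, (hKinv p).2 fun k hk => hpK ⟨k, hk⟩⟩)
end

section
/- Let A = A_1 ∪ ⋯ ∪ A_k ⊆ O_m, where each A_i is an irreducible algebraic set containing the identity matrix I_m. Let Ψ : O_m → O_n be a regular map, i.e. the restriction to O_m of a map ℝ^{m×m} → ℝ^{n×n} each of whose output entries is given by a real polynomial in the input entries, such that Ψ(O_m) ⊆ O_n. Suppose that for every i = 1,…,k the set Ψ(A_i) contains the identity matrix I_n. Then the Zariski closure of the submonoid (Ψ(A))* of O_n generated by Ψ(A) is a finite union of irreducible algebraic subsets of ℝ^{n×n}, each of which contains I_n. -/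
open Matrix

/-- A set of matrices is algebraic (over ℝ) if it is the common zero set of a set of real
polynomials in the entry variables. -/
def IsAlgebraicMat {m : Type*} [Fintype m] (A : Set (Matrix m m ℝ)) : Prop :=
  ∃ P : Set (MvPolynomial (m × m) ℝ), A = {M | ∀ p ∈ P, evalMat p M = 0}

/-- An algebraic set of matrices is irreducible if it is nonempty and cannot be written as
the union of two algebraic sets each of which is a proper subset of it. -/
def IsIrreducibleAlgMat {m : Type*} [Fintype m] (A : Set (Matrix m m ℝ)) : Prop :=
  IsAlgebraicMat A ∧ A.Nonempty ∧
    ¬ ∃ B C : Set (Matrix m m ℝ),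
        IsAlgebraicMat B ∧ IsAlgebraicMat C ∧ B ⊂ A ∧ C ⊂ A ∧ A = B ∪ C

/-- The Zariski closure of a set of matrices: the common zero set of all real polynomials
vanishing on the set. -/
def zclMat {m : Type*} [Fintype m] (A : Set (Matrix m m ℝ)) : Set (Matrix m m ℝ) :=
  {X | ∀ p : MvPolynomial (m × m) ℝ, (∀ Y ∈ A, evalMat p Y = 0) → evalMat p X = 0}

open MvPolynomial

/-- The ideal of polynomials vanishing on a set of points. -/
noncomputable def vanIdeal {σ : Type*} (S : Set (σ → ℝ)) : Ideal (MvPolynomial σ ℝ) where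
  carrier := {f | ∀ x ∈ S, eval x f = 0}
  add_mem' := by
    intro f g hf hg x hx
    simp [_root_.map_add, hf x hx, hg x hx]
  zero_mem' := by
    intro x hx; simp
  smul_mem' := by
    intro c f hf x hx
    simp [smul_eq_mul, hf x hx]

lemma mem_vanIdeal {σ : Type*} {S : Set (σ → ℝ)} {f : MvPolynomial σ ℝ} :
    f ∈ vanIdeal S ↔ ∀ x ∈ S, eval x f = 0 := Iff.rfl

lemma vanIdeal_ne_top {σ : Type*} {S : Set (σ → ℝ)} (h : S.Nonempty) :
    vanIdeal S ≠ ⊤ := by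
  intro ht
  obtain ⟨x, hx⟩ := h
  have h1 : (1 : MvPolynomial σ ℝ) ∈ vanIdeal S := by rw [ht]; trivial
  have := h1 x hx
  simp at this

lemma nonempty_of_vanIdeal_isPrime {σ : Type*} {S : Set (σ → ℝ)}
    (h : (vanIdeal S).IsPrime) : S.Nonempty := by
  by_contra he
  rw [Set.not_nonempty_iff_eq_empty] at he
  apply h.ne_top
  rw [Ideal.eq_top_iff_one]
  intro x hx
  simp [he] at hx

lemma eval_aeval'' {σ τ : Type*} (φ : σ → MvPolynomial τ ℝ) (b : τ → ℝ)
    (f : MvPolynomial σ ℝ) :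
    eval b (aeval φ f) = eval (fun s => eval b (φ s)) f := by
  induction f using MvPolynomial.induction_on with
  | C a => simp
  | add p q hp hq => simp only [_root_.map_add, hp, hq]
  | mul_X p s hp => simp only [_root_.map_mul, aeval_X, eval_X, hp]

lemma vanIdeal_singleton_isPrime {σ : Type*} (x : σ → ℝ) :
    (vanIdeal ({x} : Set (σ → ℝ))).IsPrime := by
  constructor
  · exact vanIdeal_ne_top ⟨x, rfl⟩
  · intro f g hfg
    have := hfg x rfl
    rw [_root_.map_mul, mul_eq_zero] at this
    rcases this with h | h
    · left; intro y hy; rwa [Set.mem_singleton_iff.mp hy]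
    · right; intro y hy; rwa [Set.mem_singleton_iff.mp hy]
lemma sum_elim_comp_eq {σ τ : Type*} (x : σ ⊕ τ → ℝ) :
    Sum.elim (x ∘ Sum.inl) (x ∘ Sum.inr) = x := by
  funext s; cases s <;> rfl

lemma vanIdeal_prod_isPrime {σ τ : Type*} {A : Set (σ → ℝ)} {B : Set (τ → ℝ)}
    (hA : (vanIdeal A).IsPrime) (hB : (vanIdeal B).IsPrime) :
    (vanIdeal {x : σ ⊕ τ → ℝ | (x ∘ Sum.inl) ∈ A ∧ (x ∘ Sum.inr) ∈ B}).IsPrime := by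
  obtain ⟨a0, ha0⟩ := nonempty_of_vanIdeal_isPrime hA
  obtain ⟨b0, hb0⟩ := nonempty_of_vanIdeal_isPrime hB
  set D : Set (σ ⊕ τ → ℝ) := {x | (x ∘ Sum.inl) ∈ A ∧ (x ∘ Sum.inr) ∈ B} with hD
  have hDne : D.Nonempty := ⟨Sum.elim a0 b0, by simp [hD, ha0, hb0]⟩
  constructor
  · exact vanIdeal_ne_top hDne
  · intro f g hfg
    by_contra hc
    push_neg at hc
    obtain ⟨hf, hg⟩ := hc
    rw [mem_vanIdeal] at hf hg
    push_neg at hf hg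
    obtain ⟨x1, hx1, hfx1⟩ := hf
    obtain ⟨x2, hx2, hgx2⟩ := hg
    -- partial evaluations in the second block of variables
    set φ : MvPolynomial σ ℝ := aeval (Sum.elim X (fun t => C ((x1 ∘ Sum.inr) t))) f with hφ
    set ψ : MvPolynomial σ ℝ := aeval (Sum.elim X (fun t => C ((x2 ∘ Sum.inr) t))) g with hψ
    have evφ : ∀ a : σ → ℝ, eval a φ = eval (Sum.elim a (x1 ∘ Sum.inr)) f := by
      intro a
      rw [hφ, eval_aeval'']
      have hfun : (fun s => eval a (Sum.elim X (fun t => C ((x1 ∘ Sum.inr) t)) s))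
          = Sum.elim a (x1 ∘ Sum.inr) := by funext s; cases s <;> simp
      rw [hfun]
    have evψ : ∀ a : σ → ℝ, eval a ψ = eval (Sum.elim a (x2 ∘ Sum.inr)) g := by
      intro a
      rw [hψ, eval_aeval'']
      have hfun : (fun s => eval a (Sum.elim X (fun t => C ((x2 ∘ Sum.inr) t)) s))
          = Sum.elim a (x2 ∘ Sum.inr) := by funext s; cases s <;> simp
      rw [hfun]
    -- each a ∈ A kills f or g on all of B
    have key : ∀ a ∈ A, (∀ b ∈ B, eval (Sum.elim a b) f = 0)
        ∨ (∀ b ∈ B, eval (Sum.elim a b) g = 0) := by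
      intro a ha
      set fa : MvPolynomial τ ℝ := aeval (Sum.elim (fun s => C (a s)) X) f with hfa
      set ga : MvPolynomial τ ℝ := aeval (Sum.elim (fun s => C (a s)) X) g with hga
      have hfun : ∀ b : τ → ℝ, (fun s => eval b (Sum.elim (fun s => C (a s)) X s))
          = Sum.elim a b := by intro b; funext s; cases s <;> simp
      have evfa : ∀ b : τ → ℝ, eval b fa = eval (Sum.elim a b) f := by
        intro b; rw [hfa, eval_aeval'', hfun]
      have evga : ∀ b : τ → ℝ, eval b ga = eval (Sum.elim a b) g := by
        intro b; rw [hga, eval_aeval'', hfun]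
      have hmem : fa * ga ∈ vanIdeal B := by
        intro b hb
        rw [_root_.map_mul, evfa, evga]
        have : Sum.elim a b ∈ D := by
          constructor <;> simp [ha, hb]
        have := hfg _ this
        rwa [_root_.map_mul] at this
      rcases hB.mem_or_mem hmem with h | h
      · left; intro b hb; rw [← evfa]; exact h b hb
      · right; intro b hb; rw [← evga]; exact h b hb
    have hprod : φ * ψ ∈ vanIdeal A := by
      intro a ha
      rw [_root_.map_mul, evφ, evψ]
      rcases key a ha with h | h
      · rw [h _ hx1.2]; ring
      · rw [h _ hx2.2]; ring
    rcases hA.mem_or_mem hprod with h | h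
    · have := h _ hx1.1
      rw [evφ] at this
      rw [← sum_elim_comp_eq x1] at hfx1
      exact hfx1 this
    · have := h _ hx2.1
      rw [evψ] at this
      rw [← sum_elim_comp_eq x2] at hgx2
      exact hgx2 this

lemma vanIdeal_image_eq {σ τ : Type*} {S : Set (σ → ℝ)}
    (q : τ → MvPolynomial σ ℝ) (Θ : (σ → ℝ) → (τ → ℝ))
    (hΘ : ∀ x ∈ S, Θ x = fun t => eval x (q t)) :
    vanIdeal (Θ '' S) = Ideal.comap (aeval q : MvPolynomial τ ℝ →ₐ[ℝ] MvPolynomial σ ℝ)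
      (vanIdeal S) := by
  have key : ∀ (f : MvPolynomial τ ℝ) (x : σ → ℝ), x ∈ S →
      eval x (aeval q f) = eval (Θ x) f := by
    intro f x hx
    rw [eval_aeval'', hΘ x hx]
  ext f
  constructor
  · intro h
    rw [Ideal.mem_comap]
    intro x hx
    rw [key f x hx]
    exact h (Θ x) ⟨x, hx, rfl⟩
  · intro h y hy
    obtain ⟨x, hx, rfl⟩ := hy
    rw [← key f x hx]
    exact Ideal.mem_comap.mp h x hx

lemma vanIdeal_image_isPrime {σ τ : Type*} {S : Set (σ → ℝ)}
    (hS : (vanIdeal S).IsPrime)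
    (q : τ → MvPolynomial σ ℝ) (Θ : (σ → ℝ) → (τ → ℝ))
    (hΘ : ∀ x ∈ S, Θ x = fun t => eval x (q t)) :
    (vanIdeal (Θ '' S)).IsPrime := by
  rw [vanIdeal_image_eq q Θ hΘ]
  exact Ideal.IsPrime.comap _

lemma vanIdeal_iUnion_isPrime {σ ι : Type*} [Nonempty ι] (S : ι → Set (σ → ℝ))
    (hp : ∀ i, (vanIdeal (S i)).IsPrime)
    (hdir : ∀ i j, ∃ l, S i ⊆ S l ∧ S j ⊆ S l) :
    (vanIdeal (⋃ i, S i)).IsPrime := by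
  constructor
  · obtain ⟨i⟩ := ‹Nonempty ι›
    obtain ⟨x, hx⟩ := nonempty_of_vanIdeal_isPrime (hp i)
    exact vanIdeal_ne_top ⟨x, Set.mem_iUnion.mpr ⟨i, hx⟩⟩
  · intro f g hfg
    by_contra hc
    push_neg at hc
    obtain ⟨hf, hg⟩ := hc
    rw [mem_vanIdeal] at hf hg
    push_neg at hf hg
    obtain ⟨x1, hx1, hfx1⟩ := hf
    obtain ⟨x2, hx2, hgx2⟩ := hg
    rw [Set.mem_iUnion] at hx1 hx2
    obtain ⟨i, hi⟩ := hx1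
    obtain ⟨j, hj⟩ := hx2
    obtain ⟨l, hil, hjl⟩ := hdir i j
    have hmem : f * g ∈ vanIdeal (S l) := fun x hx => hfg x (Set.mem_iUnion.mpr ⟨l, hx⟩)
    rcases (hp l).mem_or_mem hmem with h | h
    · exact hfx1 (h _ (hil hi))
    · exact hgx2 (h _ (hjl hj))
/-- View a matrix as a point of `ℝ^(N×N)`. -/
def matToFun {N : ℕ} (M : Matrix (Fin N) (Fin N) ℝ) : (Fin N × Fin N) → ℝ :=
  fun q => M q.1 q.2

/-- View a point of `ℝ^(N×N)` as a matrix. -/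
def funToMat {N : ℕ} (y : (Fin N × Fin N) → ℝ) : Matrix (Fin N) (Fin N) ℝ :=
  fun i j => y (i, j)

lemma funToMat_matToFun {N : ℕ} (M : Matrix (Fin N) (Fin N) ℝ) :
    funToMat (matToFun M) = M := rfl

lemma matToFun_funToMat {N : ℕ} (y : (Fin N × Fin N) → ℝ) :
    matToFun (funToMat y) = y := rfl

lemma evalMat_eq {N : ℕ} (p : MvPolynomial (Fin N × Fin N) ℝ)
    (M : Matrix (Fin N) (Fin N) ℝ) : evalMat p M = eval (matToFun M) p := rfl

lemma mem_vanIdeal_image {N : ℕ} {A : Set (Matrix (Fin N) (Fin N) ℝ)}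
    {f : MvPolynomial (Fin N × Fin N) ℝ} :
    f ∈ vanIdeal (matToFun '' A) ↔ ∀ M ∈ A, evalMat f M = 0 := by
  constructor
  · intro h M hM
    exact h (matToFun M) ⟨M, hM, rfl⟩
  · rintro h y ⟨M, hM, rfl⟩
    exact h M hM

lemma vanIdeal_isPrime_of_irred {N : ℕ} {A : Set (Matrix (Fin N) (Fin N) ℝ)}
    (h : IsIrreducibleAlgMat A) : (vanIdeal (matToFun '' A)).IsPrime := by
  obtain ⟨⟨P, hP⟩, hne, hirr⟩ := h
  constructor
  · exact vanIdeal_ne_top (hne.image _)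
  · intro f g hfg
    by_contra hc
    push_neg at hc
    obtain ⟨hf, hg⟩ := hc
    rw [mem_vanIdeal_image] at hf hg
    push_neg at hf hg
    set B : Set (Matrix (Fin N) (Fin N) ℝ) := {M | ∀ p ∈ P ∪ {f}, evalMat p M = 0} with hB
    set C : Set (Matrix (Fin N) (Fin N) ℝ) := {M | ∀ p ∈ P ∪ {g}, evalMat p M = 0} with hC
    have hBA : B ⊆ A := by
      intro M hM
      rw [hP]
      intro p hp
      exact hM p (Set.mem_union_left _ hp)
    have hCA : C ⊆ A := by
      intro M hM
      rw [hP]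
      intro p hp
      exact hM p (Set.mem_union_left _ hp)
    have hcup : A = B ∪ C := by
      apply Set.Subset.antisymm
      · intro M hM
        have hMP : ∀ p ∈ P, evalMat p M = 0 := by
          rw [hP] at hM; exact hM
        have := hfg (matToFun M) ⟨M, hM, rfl⟩
        rw [_root_.map_mul, mul_eq_zero] at this
        rcases this with h0 | h0
        · left
          intro p hp
          rcases hp with hp | hp
          · exact hMP p hp
          · rw [Set.mem_singleton_iff] at hp; subst hp; exact h0
        · right
          intro p hp
          rcases hp with hp | hp
          · exact hMP p hp
          · rw [Set.mem_singleton_iff] at hp; subst hp; exact h0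
      · exact Set.union_subset hBA hCA
    have hBC : B = A ∨ C = A := by
      by_contra hbc
      push_neg at hbc
      exact hirr ⟨B, C, ⟨P ∪ {f}, rfl⟩, ⟨P ∪ {g}, rfl⟩,
        ⟨hBA, fun hAB => hbc.1 (Set.Subset.antisymm hBA hAB)⟩,
        ⟨hCA, fun hAC => hbc.2 (Set.Subset.antisymm hCA hAC)⟩, hcup⟩
    rcases hBC with hBC | hBC
    · obtain ⟨M, hM, hne0⟩ := hf
      exact hne0 ((hBC ▸ hM : M ∈ B) f (Set.mem_union_right _ rfl))
    · obtain ⟨M, hM, hne0⟩ := hg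
      exact hne0 ((hBC ▸ hM : M ∈ C) g (Set.mem_union_right _ rfl))

lemma subset_zclMat {N : ℕ} (A : Set (Matrix (Fin N) (Fin N) ℝ)) : A ⊆ zclMat A :=
  fun M hM p hp => hp M hM

lemma irred_zclMat_of_prime {N : ℕ} {Mset : Set (Matrix (Fin N) (Fin N) ℝ)}
    (hne : Mset.Nonempty)
    (hp : (vanIdeal (matToFun '' Mset)).IsPrime) :
    IsIrreducibleAlgMat (zclMat Mset) := by
  have halg : IsAlgebraicMat (zclMat Mset) := by
    refine ⟨{p | ∀ Y ∈ Mset, evalMat p Y = 0}, ?_⟩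
    ext X
    exact Iff.rfl
  refine ⟨halg, hne.mono (subset_zclMat _), ?_⟩
  rintro ⟨B, C, ⟨PB, hPB⟩, ⟨PC, hPC⟩, hBsub, hCsub, hunion⟩
  -- find f vanishing on B but not on zclMat Mset
  have exf : ∃ f : MvPolynomial (Fin N × Fin N) ℝ,
      (∀ Y ∈ B, evalMat f Y = 0) ∧ ∃ X ∈ zclMat Mset, evalMat f X ≠ 0 := by
    by_contra hcon
    push_neg at hcon
    apply hBsub.2
    intro X hX
    rw [hPB]
    intro p hpB
    refine hcon p ?_ X hX
    intro Y hY
    rw [hPB] at hY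
    exact hY p hpB
  have exg : ∃ g : MvPolynomial (Fin N × Fin N) ℝ,
      (∀ Y ∈ C, evalMat g Y = 0) ∧ ∃ X ∈ zclMat Mset, evalMat g X ≠ 0 := by
    by_contra hcon
    push_neg at hcon
    apply hCsub.2
    intro X hX
    rw [hPC]
    intro p hpC
    refine hcon p ?_ X hX
    intro Y hY
    rw [hPC] at hY
    exact hY p hpC
  obtain ⟨f, hfB, X1, hX1, hfX1⟩ := exf
  obtain ⟨g, hgC, X2, hX2, hgX2⟩ := exg
  have hfgmem : f * g ∈ vanIdeal (matToFun '' Mset) := by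
    rw [mem_vanIdeal_image]
    intro M hM
    have : M ∈ B ∪ C := hunion ▸ subset_zclMat Mset hM
    rw [evalMat_eq, _root_.map_mul, ← evalMat_eq, ← evalMat_eq]
    rcases this with h0 | h0
    · rw [hfB M h0, zero_mul]
    · rw [hgC M h0, mul_zero]
  rcases hp.mem_or_mem hfgmem with h0 | h0
  · rw [mem_vanIdeal_image] at h0
    exact hfX1 (hX1 f h0)
  · rw [mem_vanIdeal_image] at h0
    exact hgX2 (hX2 g h0)
/-- Iterated product sets of images along a word. -/
def PsetAux {m n k : ℕ} (A : Fin k → Set (Matrix (Fin m) (Fin m) ℝ))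
    (Ψ : Matrix (Fin m) (Fin m) ℝ → Matrix (Fin n) (Fin n) ℝ) :
    List (Fin k) → Set (Matrix (Fin n) (Fin n) ℝ)
  | [] => {1}
  | i :: w => {Z | ∃ X ∈ A i, ∃ Y ∈ PsetAux A Ψ w, Z = Ψ X * Y}

section PsetLemmas

variable {m n k : ℕ} {A : Fin k → Set (Matrix (Fin m) (Fin m) ℝ)}
  {Ψ : Matrix (Fin m) (Fin m) ℝ → Matrix (Fin n) (Fin n) ℝ}

lemma one_mem_PsetAux (hΨone : ∀ i, (1 : Matrix (Fin n) (Fin n) ℝ) ∈ Ψ '' A i) :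
    ∀ w : List (Fin k), (1 : Matrix (Fin n) (Fin n) ℝ) ∈ PsetAux A Ψ w := by
  intro w
  induction w with
  | nil => exact rfl
  | cons i w ih =>
    obtain ⟨X, hX, hΨX⟩ := hΨone i
    exact ⟨X, hX, 1, ih, by rw [hΨX, one_mul]⟩

lemma PsetAux_mul {w1 w2 : List (Fin k)} :
    ∀ {Y Z : Matrix (Fin n) (Fin n) ℝ}, Y ∈ PsetAux A Ψ w1 → Z ∈ PsetAux A Ψ w2 →
      Y * Z ∈ PsetAux A Ψ (w1 ++ w2) := by
  induction w1 with
  | nil =>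
    intro Y Z hY hZ
    rw [Set.mem_singleton_iff.mp hY, one_mul]
    exact hZ
  | cons i w ih =>
    rintro Y Z ⟨X, hX, Y', hY', rfl⟩ hZ
    exact ⟨X, hX, Y' * Z, ih hY' hZ, mul_assoc _ _ _⟩

lemma PsetAux_subset_append_left (hΨone : ∀ i, (1 : Matrix (Fin n) (Fin n) ℝ) ∈ Ψ '' A i)
    (w1 w2 : List (Fin k)) : PsetAux A Ψ w1 ⊆ PsetAux A Ψ (w1 ++ w2) := by
  intro Y hY
  have := PsetAux_mul hY (one_mem_PsetAux hΨone w2)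
  rwa [mul_one] at this

lemma PsetAux_subset_append_right (hΨone : ∀ i, (1 : Matrix (Fin n) (Fin n) ℝ) ∈ Ψ '' A i)
    (w1 w2 : List (Fin k)) : PsetAux A Ψ w2 ⊆ PsetAux A Ψ (w1 ++ w2) := by
  intro Z hZ
  have := PsetAux_mul (one_mem_PsetAux hΨone w1) hZ
  rwa [one_mul] at this

lemma closure_eq_iUnion_PsetAux (hΨone : ∀ i, (1 : Matrix (Fin n) (Fin n) ℝ) ∈ Ψ '' A i) :
    (Submonoid.closure (Ψ '' ⋃ i, A i) : Set (Matrix (Fin n) (Fin n) ℝ)) =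
      ⋃ w : List (Fin k), PsetAux A Ψ w := by
  apply Set.Subset.antisymm
  · intro x hx
    induction hx using Submonoid.closure_induction with
    | mem x h =>
      obtain ⟨a, ha, rfl⟩ := h
      rw [Set.mem_iUnion] at ha
      obtain ⟨i, hai⟩ := ha
      exact Set.mem_iUnion.mpr ⟨[i], a, hai, 1, rfl, (mul_one _).symm⟩
    | one => exact Set.mem_iUnion.mpr ⟨[], rfl⟩
    | mul x y hx hy ihx ihy =>
      obtain ⟨w1, h1⟩ := Set.mem_iUnion.mp ihx
      obtain ⟨w2, h2⟩ := Set.mem_iUnion.mp ihy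
      exact Set.mem_iUnion.mpr ⟨w1 ++ w2, PsetAux_mul h1 h2⟩
  · rw [Set.iUnion_subset_iff]
    intro w
    induction w with
    | nil =>
      intro Z hZ
      rw [Set.mem_singleton_iff.mp hZ]
      exact Submonoid.one_mem _
    | cons i w ih =>
      rintro Z ⟨X, hX, Y, hY, rfl⟩
      exact Submonoid.mul_mem _
        (Submonoid.subset_closure ⟨X, Set.mem_iUnion.mpr ⟨i, hX⟩, rfl⟩) (ih hY)

open MvPolynomial in
lemma vanIdeal_PsetAux_isPrime
    (hAsub : ∀ i, A i ⊆ (Matrix.orthogonalGroup (Fin m) ℝ : Set (Matrix (Fin m) (Fin m) ℝ)))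
    (hAirr : ∀ i, IsIrreducibleAlgMat (A i))
    (p : Fin n × Fin n → MvPolynomial (Fin m × Fin m) ℝ)
    (hp : ∀ X ∈ (Matrix.orthogonalGroup (Fin m) ℝ : Set (Matrix (Fin m) (Fin m) ℝ)),
      ∀ q : Fin n × Fin n, Ψ X q.1 q.2 = evalMat (p q) X) :
    ∀ w : List (Fin k), (vanIdeal (matToFun '' PsetAux A Ψ w)).IsPrime := by
  intro w
  induction w with
  | nil =>
    rw [show (PsetAux A Ψ [] : Set (Matrix (Fin n) (Fin n) ℝ)) = {1} from rfl,
      Set.image_singleton]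
    exact vanIdeal_singleton_isPrime _
  | cons i w ih =>
    have hCi : (vanIdeal (matToFun '' A i)).IsPrime := vanIdeal_isPrime_of_irred (hAirr i)
    set D : Set ((Fin n × Fin n) ⊕ (Fin m × Fin m) → ℝ) :=
      {x | (x ∘ Sum.inl) ∈ matToFun '' PsetAux A Ψ w ∧ (x ∘ Sum.inr) ∈ matToFun '' A i}
      with hD
    have hDprime : (vanIdeal D).IsPrime := vanIdeal_prod_isPrime ih hCi
    have hΘ : ∀ x ∈ D, matToFun (Ψ (funToMat (x ∘ Sum.inr)) * funToMat (x ∘ Sum.inl)) =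
        fun t : Fin n × Fin n => eval x (∑ c : Fin n,
          (rename Sum.inr (p (t.1, c))) * X (Sum.inl (c, t.2))) := by
      rintro x ⟨⟨Y0, hY0, hxl⟩, X0, hX0, hxr⟩
      have hX0' : funToMat (x ∘ Sum.inr) = X0 := by rw [← hxr, funToMat_matToFun]
      have hY0' : funToMat (x ∘ Sum.inl) = Y0 := by rw [← hxl, funToMat_matToFun]
      rw [hX0', hY0']
      funext t
      show (Ψ X0 * Y0) t.1 t.2 = _
      rw [Matrix.mul_apply, _root_.map_sum]
      apply Finset.sum_congr rfl
      intro c _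
      rw [_root_.map_mul, eval_rename, eval_X]
      congr 1
      · have h1 : Ψ X0 t.1 c = evalMat (p (t.1, c)) X0 := hp X0 (hAsub i hX0) (t.1, c)
        rw [h1, evalMat_eq, hxr]
      · exact congrFun hxl (c, t.2)
    have himg : matToFun '' PsetAux A Ψ (i :: w) =
        (fun x : ((Fin n × Fin n) ⊕ (Fin m × Fin m) → ℝ) =>
          matToFun (Ψ (funToMat (x ∘ Sum.inr)) * funToMat (x ∘ Sum.inl))) '' D := by
      apply Set.Subset.antisymm
      · rintro _ ⟨Z, ⟨X0, hX0, Y0, hY0, rfl⟩, rfl⟩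
        exact ⟨Sum.elim (matToFun Y0) (matToFun X0), ⟨⟨Y0, hY0, rfl⟩, ⟨X0, hX0, rfl⟩⟩, rfl⟩
      · rintro _ ⟨x, ⟨⟨Y0, hY0, hxl⟩, X0, hX0, hxr⟩, rfl⟩
        refine ⟨Ψ X0 * Y0, ⟨X0, hX0, Y0, hY0, rfl⟩, ?_⟩
        show _ = matToFun (Ψ (funToMat (x ∘ Sum.inr)) * funToMat (x ∘ Sum.inl))
        rw [← hxr, ← hxl, funToMat_matToFun, funToMat_matToFun]
    rw [himg]
    exact vanIdeal_image_isPrime hDprime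
      (fun t : Fin n × Fin n => ∑ c : Fin n,
        (rename Sum.inr (p (t.1, c))) * X (Sum.inl (c, t.2)))
      (fun x => matToFun (Ψ (funToMat (x ∘ Sum.inr)) * funToMat (x ∘ Sum.inl))) hΘ
end PsetLemmas
/-- Let `A = A₁ ∪ ⋯ ∪ A_k ⊆ O_m`, each `A_i` an irreducible algebraic set
containing `I_m`, and let `Ψ : O_m → O_n` be (the restriction to `O_m` of) a polynomial map
with `Ψ(O_m) ⊆ O_n` and `I_n ∈ Ψ(A_i)` for every `i`. Then the Zariski closure of the
submonoid generated by `Ψ(A)` is a finite union of irreducible algebraic sets, each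
containing `I_n`. -/
theorem zariskiClosure_monoid_image_finite_union_irreducible {m n k : ℕ}
    (A : Fin k → Set (Matrix (Fin m) (Fin m) ℝ))
    (hAsub : ∀ i, A i ⊆ (Matrix.orthogonalGroup (Fin m) ℝ : Set (Matrix (Fin m) (Fin m) ℝ)))
    (hAirr : ∀ i, IsIrreducibleAlgMat (A i))
    (hAone : ∀ i, (1 : Matrix (Fin m) (Fin m) ℝ) ∈ A i)
    (Ψ : Matrix (Fin m) (Fin m) ℝ → Matrix (Fin n) (Fin n) ℝ)
    (hΨpoly : ∃ p : Fin n × Fin n → MvPolynomial (Fin m × Fin m) ℝ,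
      ∀ X ∈ (Matrix.orthogonalGroup (Fin m) ℝ : Set (Matrix (Fin m) (Fin m) ℝ)),
        ∀ q : Fin n × Fin n, Ψ X q.1 q.2 = evalMat (p q) X)
    (hΨorth : ∀ X ∈ (Matrix.orthogonalGroup (Fin m) ℝ : Set (Matrix (Fin m) (Fin m) ℝ)),
      Ψ X ∈ (Matrix.orthogonalGroup (Fin n) ℝ : Set (Matrix (Fin n) (Fin n) ℝ)))
    (hΨone : ∀ i, (1 : Matrix (Fin n) (Fin n) ℝ) ∈ Ψ '' A i) :
    ∃ t : ℕ, ∃ B : Fin t → Set (Matrix (Fin n) (Fin n) ℝ),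
      (∀ j, IsIrreducibleAlgMat (B j) ∧ (1 : Matrix (Fin n) (Fin n) ℝ) ∈ B j) ∧
      zclMat (Submonoid.closure (Ψ '' ⋃ i, A i) : Set (Matrix (Fin n) (Fin n) ℝ)) =
        ⋃ j, B j := by
  obtain ⟨p, hp⟩ := hΨpoly
  set Mset : Set (Matrix (Fin n) (Fin n) ℝ) :=
    ↑(Submonoid.closure (Ψ '' ⋃ i, A i)) with hMdef
  have hMeq : Mset = ⋃ w : List (Fin k), PsetAux A Ψ w := closure_eq_iUnion_PsetAux hΨone
  have hprime : (vanIdeal (matToFun '' Mset)).IsPrime := by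
    rw [hMeq, Set.image_iUnion]
    refine vanIdeal_iUnion_isPrime _ (fun w => vanIdeal_PsetAux_isPrime hAsub hAirr p hp w) ?_
    intro w1 w2
    exact ⟨w1 ++ w2, Set.image_mono (PsetAux_subset_append_left hΨone w1 w2),
      Set.image_mono (PsetAux_subset_append_right hΨone w1 w2)⟩
  have h1M : (1 : Matrix (Fin n) (Fin n) ℝ) ∈ Mset := Submonoid.one_mem _
  refine ⟨1, fun _ => zclMat Mset, fun j => ⟨?_, ?_⟩, ?_⟩
  · exact irred_zclMat_of_prime ⟨1, h1M⟩ hprime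
  · exact subset_zclMat Mset h1M
  · rw [Set.iUnion_const]
end

section
/- Let G = ⟨V, Σ, P, S⟩ be a context-free grammar with axiom S, let φ : Σ* → O_n be a monoid morphism into the group of real orthogonal n×n matrices, let w ∈ Σ* be a fixed word, and let L = {u w v : (u,v) ∈ C_S}. Then Cl(φ(L)) = {X φ(w) Yᵀ : X ⊕ Y ∈ Cl(M_S)}. -/
/-! `u w v ↦ φ(u) φ(w) φ(v)` is the image of `φ(u) ⊕ φ(v)ᵀ ∈ M_S` under the
continuous map `X ⊕ Y ↦ X φ(w) Yᵀ`. Since `M_S` consists of orthogonal matrices, its closure is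
compact, and a continuous image of the closure of a relatively compact set is the closure of the
image. Finally `Cl(M_S)` stays block diagonal, because block-diagonal matrices form a closed set. -/

open Matrix

/-- The monoid of cycles of a variable `A` of a context-free grammar `g`, relative to a
monoid morphism `φ` into the orthogonal matrices:
`M_A = {φ(u) ⊕ φ(v)ᵀ : (u,v) ∈ C_A}`, where `C_A = {(u,v) : A ⇒* u A v}`. -/
def cycleMonoid {T : Type*} {n : ℕ} (g : ContextFreeGrammar T) (A : g.NT)
    (φ : FreeMonoid T →* Matrix (Fin n) (Fin n) ℝ) :
    Set (Matrix (Fin n ⊕ Fin n) (Fin n ⊕ Fin n) ℝ) :=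
  {Z | ∃ u v : List T,
    g.Derives [Symbol.nonterminal A]
      (u.map Symbol.terminal ++ [Symbol.nonterminal A] ++ v.map Symbol.terminal) ∧
    Z = Matrix.fromBlocks (φ (FreeMonoid.ofList u)) 0 0 ((φ (FreeMonoid.ofList v))ᵀ)}

namespace Matrix

variable {k l m n : Type*}

theorem fromBlocks_zero_mem_unitaryGroup {α : Type*} [Fintype m] [DecidableEq m] [Fintype n]
    [DecidableEq n] [CommRing α] [StarRing α] {A : Matrix m m α} {B : Matrix n n α}
    (hA : A ∈ unitaryGroup m α) (hB : B ∈ unitaryGroup n α) :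
    fromBlocks A 0 0 B ∈ unitaryGroup (m ⊕ n) α := by
  rw [mem_unitaryGroup_iff] at *
  rw [star_eq_conjTranspose, fromBlocks_conjTranspose, fromBlocks_multiply,
    ← star_eq_conjTranspose, ← star_eq_conjTranspose, hA, hB]
  simp

theorem isCompact_orthogonalGroup [Fintype n] [DecidableEq n] :
    IsCompact (orthogonalGroup n ℝ : Set (Matrix n n ℝ)) :=
  (isCompact_univ_pi fun _ => isCompact_univ_pi fun _ => isCompact_Icc).of_isClosed_subset
    (isClosed_unitary (R := Matrix n n ℝ))
    fun _U hU i _ j _ => abs_le.mp (entry_norm_bound_of_unitary hU i j)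

theorem isClosed_range_fromBlocks_zero {α : Type*} [TopologicalSpace α] [T2Space α] [Zero α] :
    IsClosed (Set.range fun p : Matrix k m α × Matrix l n α => fromBlocks p.1 0 0 p.2) := by
  have hP : Continuous fun Z : Matrix (k ⊕ l) (m ⊕ n) α =>
      fromBlocks Z.toBlocks₁₁ 0 0 Z.toBlocks₂₂ :=
    (continuous_id.matrix_submatrix _ _).matrix_fromBlocks continuous_const continuous_const
      (continuous_id.matrix_submatrix _ _)
  convert isClosed_eq hP continuous_id using 1
  ext Z
  constructor
  · rintro ⟨⟨X, Y⟩, rfl⟩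
    simp
  · exact fun hZ => ⟨(Z.toBlocks₁₁, Z.toBlocks₂₂), hZ⟩

variable {α : Type*} [NonUnitalNonAssocSemiring α] [Fintype m] [Fintype n]

def blockSandwich (W : Matrix m n α) (Z : Matrix (k ⊕ l) (m ⊕ n) α) : Matrix k l α :=
  Z.toBlocks₁₁ * W * Z.toBlocks₂₂ᵀ

@[simp]
theorem blockSandwich_fromBlocks (W : Matrix m n α) (X : Matrix k m α) (Y : Matrix l n α) :
    blockSandwich W (fromBlocks X 0 0 Y) = X * W * Yᵀ := by
  simp [blockSandwich]

theorem continuous_blockSandwich [TopologicalSpace α] [IsTopologicalSemiring α]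
    (W : Matrix m n α) :
    Continuous (blockSandwich W : Matrix (k ⊕ l) (m ⊕ n) α → Matrix k l α) :=
  ((continuous_id.matrix_submatrix _ _).matrix_mul continuous_const).matrix_mul
    (continuous_id.matrix_submatrix _ _).matrix_transpose

end Matrix

section cycleMonoid

variable {T : Type*} {n : ℕ} (g : ContextFreeGrammar T) (A : g.NT)
  (φ : FreeMonoid T →* Matrix (Fin n) (Fin n) ℝ)

theorem cycleMonoid_subset_range_fromBlocks :
    cycleMonoid g A φ ⊆ Set.range fun p : Matrix (Fin n) (Fin n) ℝ × Matrix (Fin n) (Fin n) ℝ =>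
      fromBlocks p.1 0 0 p.2 := by
  rintro _ ⟨u, v, -, rfl⟩
  exact ⟨(_, _), rfl⟩

theorem cycleMonoid_subset_orthogonalGroup
    (hφ : ∀ x, φ x ∈ (orthogonalGroup (Fin n) ℝ : Set (Matrix (Fin n) (Fin n) ℝ))) :
    cycleMonoid g A φ ⊆ orthogonalGroup (Fin n ⊕ Fin n) ℝ := by
  rintro _ ⟨u, v, -, rfl⟩
  exact fromBlocks_zero_mem_unitaryGroup (hφ _) (transpose_mem_unitaryGroup_iff.mpr (hφ _))

theorem image_sandwichedWords_eq_image_cycleMonoid (w : List T) :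
    (fun x : List T => φ (FreeMonoid.ofList x)) ''
        {x | ∃ u v : List T,
          g.Derives [Symbol.nonterminal A]
            (u.map Symbol.terminal ++ [Symbol.nonterminal A] ++ v.map Symbol.terminal) ∧
          x = u ++ w ++ v} =
      blockSandwich (φ (FreeMonoid.ofList w)) '' cycleMonoid g A φ := by
  ext Z
  constructor
  · rintro ⟨_, ⟨u, v, hd, rfl⟩, rfl⟩
    exact ⟨_, ⟨u, v, hd, rfl⟩, by simp [FreeMonoid.ofList_append, mul_assoc]⟩
  · rintro ⟨_, ⟨u, v, hd, rfl⟩, rfl⟩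
    exact ⟨u ++ w ++ v, ⟨u, v, hd, rfl⟩, by simp [FreeMonoid.ofList_append, mul_assoc]⟩

end cycleMonoid

/-- Let `g` be a context-free grammar with axiom `S`, `φ : Σ* → O_n` a
monoid morphism, `w` a fixed word, and `L = {u w v : (u,v) ∈ C_S}`. Then
`Cl(φ(L)) = {X φ(w) Yᵀ : X ⊕ Y ∈ Cl(M_S)}`. -/
theorem closure_image_sandwich_eq {T : Type*} {n : ℕ}
    (g : ContextFreeGrammar T)
    (φ : FreeMonoid T →* Matrix (Fin n) (Fin n) ℝ)
    (hφ : ∀ x : FreeMonoid T,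
      φ x ∈ (Matrix.orthogonalGroup (Fin n) ℝ : Set (Matrix (Fin n) (Fin n) ℝ)))
    (w : List T) :
    closure ((fun x : List T => φ (FreeMonoid.ofList x)) ''
        {x : List T | ∃ u v : List T,
          g.Derives [Symbol.nonterminal g.initial]
            (u.map Symbol.terminal ++ [Symbol.nonterminal g.initial] ++
              v.map Symbol.terminal) ∧
          x = u ++ w ++ v}) =
      {Z : Matrix (Fin n) (Fin n) ℝ | ∃ X Y : Matrix (Fin n) (Fin n) ℝ,
        Matrix.fromBlocks X 0 0 Y ∈ closure (cycleMonoid g g.initial φ) ∧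
        Z = X * φ (FreeMonoid.ofList w) * Yᵀ} := by
  set M := cycleMonoid g g.initial φ
  have hcompact : IsCompact (closure M) :=
    isCompact_orthogonalGroup.of_isClosed_subset isClosed_closure
      (closure_minimal (cycleMonoid_subset_orthogonalGroup g _ φ hφ)
        isCompact_orthogonalGroup.isClosed)
  have hblock := closure_minimal (cycleMonoid_subset_range_fromBlocks g g.initial φ)
    isClosed_range_fromBlocks_zero
  rw [image_sandwichedWords_eq_image_cycleMonoid, ← image_closure_of_isCompact hcompact
    (continuous_blockSandwich _).continuousOn]
  ext Z
  constructor
  · rintro ⟨_, hZ, rfl⟩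
    obtain ⟨⟨X, Y⟩, rfl⟩ := hblock hZ
    exact ⟨X, Y, hZ, blockSandwich_fromBlocks _ X Y⟩
  · rintro ⟨X, Y, hXY, rfl⟩
    exact ⟨_, hXY, blockSandwich_fromBlocks _ X Y⟩
end

section
/- Let G = ⟨V, Σ, P, S⟩ be a context-free grammar and set V' = V \ {S}. For each A ∈ V', let G_A = ⟨V', Σ, P_A, A⟩ be the context-free grammar with axiom A whose productions P_A are exactly the productions B → γ of G with B ∈ V' and γ ∈ (V' ∪ Σ)*, and let L_A = L(G_A) be its language. Then L(G) equals the union, over all productions S → β of G with β ∈ (V' ∪ Σ)*, of the languages C_S ⋄ (w_1 L_{A_1} w_2 L_{A_2} ⋯ w_ℓ L_{A_ℓ} w_{ℓ+1}), where β is factorized as β = w_1 A_1 w_2 A_2 ⋯ w_ℓ A_ℓ w_{ℓ+1} with w_1,…,w_{ℓ+1} ∈ Σ* and A_1,…,A_ℓ ∈ V'. -/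
/-- One derivation step of the grammar `g` using only productions `B → γ` with
`B ≠ S` and `γ` containing no occurrence of the nonterminal `S`
(these are exactly the productions of the grammars `G_A` of the structuring). -/
def ProducesAvoiding {T : Type*} (g : ContextFreeGrammar T)
    (u v : List (Symbol T g.NT)) : Prop :=
  ∃ r ∈ g.rules, r.input ≠ g.initial ∧
    Symbol.nonterminal g.initial ∉ r.output ∧ r.Rewrites u v

/-- The language `L_A` generated by the grammar `G_A = ⟨V', Σ, P_A, A⟩`, whose productions
are exactly the productions of `g` not involving the axiom `S`. -/
def subLanguage {T : Type*} (g : ContextFreeGrammar T) (A : g.NT) : Language T :=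
  {w : List T | Relation.ReflTransGen (ProducesAvoiding g)
    [Symbol.nonterminal A] (w.map Symbol.terminal)}

/-- The language associated with a single symbol: a terminal `a` yields `{a}`;
a nonterminal `A` yields `L_A`. -/
def symbolLanguage {T : Type*} (g : ContextFreeGrammar T) :
    Symbol T g.NT → Language T
  | Symbol.terminal a => {[a]}
  | Symbol.nonterminal A => subLanguage g A

/-- For `β = w₁ A₁ w₂ A₂ ⋯ w_ℓ A_ℓ w_{ℓ+1}`, the concatenation language
`w₁ L_{A₁} w₂ L_{A₂} ⋯ w_ℓ L_{A_ℓ} w_{ℓ+1}`. -/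
def substLanguage {T : Type*} (g : ContextFreeGrammar T)
    (β : List (Symbol T g.NT)) : Language T :=
  (β.map (symbolLanguage g)).prod

/-!
Follow a derivation `S ⇒* w` back to its last step rewriting `S`. The remaining productions
(`ProducesAvoiding`) act independently on the factors of a sentential form, so `β` derives the
terminal word `w` with them alone iff `w ∈ substLanguage g β`. They can never erase an
occurrence of `S`, so the last `S`-step uses a rule `S → β` with `S ∉ β`, and its context
already derives terminal words `u`, `v`: thus `w = u x v` with `S ⇒* u S v` and
`x ∈ substLanguage g β`.
-/

section

variable {T : Type*} {g : ContextFreeGrammar T}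

abbrev DerivesAvoiding (g : ContextFreeGrammar T) :
    List (Symbol T g.NT) → List (Symbol T g.NT) → Prop :=
  Relation.ReflTransGen (ProducesAvoiding g)

namespace ProducesAvoiding

variable {u v : List (Symbol T g.NT)}

lemma produces (h : ProducesAvoiding g u v) : g.Produces u v :=
  let ⟨r, hr, _, _, hrw⟩ := h; ⟨r, hr, hrw⟩

lemma append_left (h : ProducesAvoiding g u v) (p : List (Symbol T g.NT)) :
    ProducesAvoiding g (p ++ u) (p ++ v) :=
  let ⟨r, hr, hin, hout, hrw⟩ := h; ⟨r, hr, hin, hout, hrw.append_left p⟩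

lemma append_right (h : ProducesAvoiding g u v) (q : List (Symbol T g.NT)) :
    ProducesAvoiding g (u ++ q) (v ++ q) :=
  let ⟨r, hr, hin, hout, hrw⟩ := h; ⟨r, hr, hin, hout, hrw.append_right q⟩

lemma nonterminal_initial_mem (h : ProducesAvoiding g u v)
    (hS : Symbol.nonterminal g.initial ∈ u) : Symbol.nonterminal g.initial ∈ v := by
  obtain ⟨r, -, hin, -, hrw⟩ := h
  obtain ⟨p, q, rfl, rfl⟩ := hrw.exists_parts
  simp only [List.mem_append, List.mem_singleton, Symbol.nonterminal.injEq] at hS ⊢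
  rcases hS with (hp | hS) | hq
  · exact .inl (.inl hp)
  · exact absurd hS.symm hin
  · exact .inr hq

end ProducesAvoiding

namespace DerivesAvoiding

variable {u v : List (Symbol T g.NT)}

lemma derives (h : DerivesAvoiding g u v) : g.Derives u v :=
  h.lift id fun _ _ => ProducesAvoiding.produces

lemma append (h : DerivesAvoiding g u v) {u' v' : List (Symbol T g.NT)}
    (h' : DerivesAvoiding g u' v') : DerivesAvoiding g (u ++ u') (v ++ v') :=
  (h.lift (· ++ u') fun _ _ hs => hs.append_right u').trans
    (h'.lift (v ++ ·) fun _ _ hs => hs.append_left v)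

lemma nonterminal_initial_mem (h : DerivesAvoiding g u v)
    (hS : Symbol.nonterminal g.initial ∈ u) : Symbol.nonterminal g.initial ∈ v := by
  induction h with
  | refl => exact hS
  | tail _ hs ih => exact hs.nonterminal_initial_mem ih

end DerivesAvoiding

lemma not_derivesAvoiding_map_terminal {u : List (Symbol T g.NT)}
    (hS : Symbol.nonterminal g.initial ∈ u) (w : List T) :
    ¬ DerivesAvoiding g u (w.map Symbol.terminal) := fun h => by
  simpa using h.nonterminal_initial_mem hS

@[simp]
lemma substLanguage_append (β γ : List (Symbol T g.NT)) :
    substLanguage g (β ++ γ) = substLanguage g β * substLanguage g γ := by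
  simp [substLanguage]

@[simp]
lemma substLanguage_cons (s : Symbol T g.NT) (β : List (Symbol T g.NT)) :
    substLanguage g (s :: β) = symbolLanguage g s * substLanguage g β := by
  simp [substLanguage]

@[simp]
lemma substLanguage_singleton (s : Symbol T g.NT) :
    substLanguage g [s] = symbolLanguage g s := by
  simp [substLanguage]

lemma mem_substLanguage_map_terminal (w : List T) :
    w ∈ substLanguage g (w.map Symbol.terminal) := by
  induction w with
  | nil => exact (Language.mem_one _).mpr rfl
  | cons a w ih =>
    rw [List.map_cons, substLanguage_cons]
    exact Language.mem_mul.mpr ⟨[a], rfl, w, ih, rfl⟩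

lemma derivesAvoiding_of_mem_substLanguage {β : List (Symbol T g.NT)} {w : List T}
    (hw : w ∈ substLanguage g β) : DerivesAvoiding g β (w.map Symbol.terminal) := by
  induction β generalizing w with
  | nil => obtain rfl := (Language.mem_one w).mp hw; rfl
  | cons s β ih =>
    rw [substLanguage_cons] at hw
    obtain ⟨w₁, hw₁, w₂, hw₂, rfl⟩ := Language.mem_mul.mp hw
    have hs : DerivesAvoiding g [s] (w₁.map Symbol.terminal) := by
      cases s with
      | terminal a => rw [show w₁ = [a] from hw₁]; rfl
      | nonterminal A => exact hw₁
    simpa using hs.append (ih hw₂)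

lemma mem_substLanguage_of_derivesAvoiding {β : List (Symbol T g.NT)} {w : List T}
    (h : DerivesAvoiding g β (w.map Symbol.terminal)) : w ∈ substLanguage g β := by
  induction h using Relation.ReflTransGen.head_induction_on with
  | refl => exact mem_substLanguage_map_terminal w
  | head hstep _ ih =>
    obtain ⟨r, hr, hin, hout, hrw⟩ := hstep
    obtain ⟨p, q, rfl, rfl⟩ := hrw.exists_parts
    simp only [substLanguage_append, substLanguage_singleton] at ih ⊢
    obtain ⟨_, ⟨u, hu, x, hx, rfl⟩, v, hv, rfl⟩ := ih
    have hx' : x ∈ subLanguage g r.input :=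
      .head ⟨r, hr, hin, hout, .input_output⟩ (derivesAvoiding_of_mem_substLanguage hx)
    exact ⟨_, ⟨u, hu, x, hx', rfl⟩, v, hv, rfl⟩

lemma mem_substLanguage_iff {β : List (Symbol T g.NT)} {w : List T} :
    w ∈ substLanguage g β ↔ DerivesAvoiding g β (w.map Symbol.terminal) :=
  ⟨derivesAvoiding_of_mem_substLanguage, mem_substLanguage_of_derivesAvoiding⟩

def initialRules (g : ContextFreeGrammar T) : Set (ContextFreeRule T g.NT) :=
  {r | r ∈ g.rules ∧ r.input = g.initial ∧ Symbol.nonterminal g.initial ∉ r.output}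

/-- For `α = [S]` this is the paper's `C_S ⋄ substLanguage g r.output`. -/
def sandwich (g : ContextFreeGrammar T) (α : List (Symbol T g.NT))
    (r : ContextFreeRule T g.NT) : Language T :=
  {w | ∃ u v x : List T,
    g.Derives α (u.map Symbol.terminal ++ [Symbol.nonterminal g.initial] ++
      v.map Symbol.terminal) ∧
    x ∈ substLanguage g r.output ∧ w = u ++ x ++ v}

lemma derivesAvoiding_or_mem_sandwich_of_produces {α β : List (Symbol T g.NT)} {w : List T}
    (hαβ : g.Produces α β) (hβ : DerivesAvoiding g β (w.map Symbol.terminal)) :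
    DerivesAvoiding g α (w.map Symbol.terminal) ∨ ∃ r ∈ initialRules g, w ∈ sandwich g α r := by
  obtain ⟨r, hr, hrw⟩ := hαβ
  have hout : Symbol.nonterminal g.initial ∉ r.output := fun hS => by
    obtain ⟨p, q, -, rfl⟩ := hrw.exists_parts
    exact not_derivesAvoiding_map_terminal (by simp [hS]) w hβ
  by_cases hin : r.input = g.initial
  · obtain ⟨p, q, rfl, rfl⟩ := hrw.exists_parts
    obtain ⟨_, ⟨u, hu, x, hx, rfl⟩, v, hv, rfl⟩ :
        w ∈ substLanguage g p * substLanguage g r.output * substLanguage g q := by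
      simpa only [substLanguage_append] using mem_substLanguage_iff.mpr hβ
    have hpq := ((mem_substLanguage_iff.mp hu).append
      (.refl (a := [Symbol.nonterminal r.input]))).append (mem_substLanguage_iff.mp hv)
    exact .inr ⟨r, ⟨hr, hin, hout⟩, u, v, x, hin ▸ hpq.derives, hx, rfl⟩
  · exact .inl (hβ.head ⟨r, hr, hin, hout, hrw⟩)

lemma derivesAvoiding_or_mem_sandwich {α : List (Symbol T g.NT)} {w : List T}
    (h : g.Derives α (w.map Symbol.terminal)) :
    DerivesAvoiding g α (w.map Symbol.terminal) ∨ ∃ r ∈ initialRules g, w ∈ sandwich g α r := by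
  induction h using Relation.ReflTransGen.head_induction_on with
  | refl => exact .inl .refl
  | head hstep _ ih =>
    rcases ih with hβ | ⟨r, hr, u, v, x, hd, hx, hw⟩
    · exact derivesAvoiding_or_mem_sandwich_of_produces hstep hβ
    · exact .inr ⟨r, hr, u, v, x, hstep.trans_derives hd, hx, hw⟩

lemma sandwich_le_language {r : ContextFreeRule T g.NT} (hr : r ∈ initialRules g) :
    sandwich g [Symbol.nonterminal g.initial] r ≤ g.language := by
  rintro _ ⟨u, v, x, hd, hx, rfl⟩
  obtain ⟨hr, hin, -⟩ := hr
  have hS : g.Produces [Symbol.nonterminal g.initial] r.output :=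
    ⟨r, hr, hin ▸ ContextFreeRule.Rewrites.input_output⟩
  have hx' := (hS.trans_derives (mem_substLanguage_iff.mp hx).derives).append_left
    (u.map Symbol.terminal) |>.append_right (v.map Symbol.terminal)
  change g.Derives _ ((u ++ x ++ v).map Symbol.terminal)
  simpa using hd.trans hx'

end

/-- Structuring of a context-free language: `L(G)` is the union, over the
productions `S → β` of `G` whose right-hand side `β` avoids the axiom `S`, of the languages
`C_S ⋄ (w₁ L_{A₁} w₂ L_{A₂} ⋯ w_ℓ L_{A_ℓ} w_{ℓ+1})`, where
`C_S = {(u,v) : S ⇒* u S v}` and `β = w₁ A₁ w₂ ⋯ w_ℓ A_ℓ w_{ℓ+1}`. -/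
theorem language_eq_union_sandwich {T : Type*} (g : ContextFreeGrammar T) :
    g.language =
      ⋃ r ∈ {r : ContextFreeRule T g.NT | r ∈ g.rules ∧ r.input = g.initial ∧
          Symbol.nonterminal g.initial ∉ r.output},
        {w : List T | ∃ u v x : List T,
          g.Derives [Symbol.nonterminal g.initial]
            (u.map Symbol.terminal ++ [Symbol.nonterminal g.initial] ++
              v.map Symbol.terminal) ∧
          x ∈ substLanguage g r.output ∧ w = u ++ x ++ v} := by
  change g.language = ⋃ r ∈ initialRules g, sandwich g [Symbol.nonterminal g.initial] r
  refine le_antisymm (fun w hw => ?_) (Set.iUnion₂_subset fun r => sandwich_le_language)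
  rcases derivesAvoiding_or_mem_sandwich hw with h | ⟨r, hr, hw⟩
  · exact absurd h (not_derivesAvoiding_map_terminal (by simp) w)
  · exact Set.mem_iUnion₂.mpr ⟨r, hr, hw⟩
end
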